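/- arXiv:2009.00344 — 4 statements merged into one kernel-verified Lean document; each statement's English description precedes it below -/
import Mathlib

section
/- Let R = ℤ and S = aℤ + b for integers a, b. Then for every prime p, the sequence u_i = a·i + b (i ≥ 0) is a p-sequence of S, i.e., for each k > 0 the polynomial (x−u_0)⋯(x−u_{k−1})/((u_k−u_0)⋯(u_k−u_{k−1})) maps every element of S into ℤ_{(p)}. -/
/-!
Since `u_n - u_i = a (n - i)`, the quotient is `a^k k! C(n, k) / (a^k k!)` with the binomial
coefficient `C(n, k) = n (n-1) ⋯ (n-k+1) / k!` an integer. So the quotient is `C(n, k)` when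
`a ≠ 0` and `0 / 0 = 0` when `a = 0`; either way it is an integer, hence lies in `ℤ_{(p)}`.
-/

/-- A rational number lies in the localization `ℤ_{(p)}`: it can be written `x / y`
with `y` not divisible by `p`. -/
def InZLoc (p : ℕ) (q : ℚ) : Prop :=
  ∃ x y : ℤ, ¬ ((p : ℤ) ∣ y) ∧ q = (x : ℚ) / (y : ℚ)

open Finset Nat

lemma inZLoc_intCast {p : ℕ} (hp : p ≠ 1) (m : ℤ) : InZLoc p m :=
  ⟨m, 1, by exact_mod_cast Nat.dvd_one.not.mpr hp, by simp⟩

lemma exists_intCast_eq_mul_div_self (d c : ℤ) : ∃ m : ℤ, (d * c : ℚ) / d = m := by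
  rcases eq_or_ne d 0 with rfl | hd
  · exact ⟨0, by simp⟩
  · exact ⟨c, by field_simp⟩

lemma prod_range_sub_eq_factorial_mul_choose {R : Type*} [CommRing R] [BinomialRing R]
    (k : ℕ) (r : R) : ∏ i ∈ range k, (r - i) = k ! * Ring.choose r k := by
  rw [← descPochhammer_eval_eq_prod_range, ← nsmul_eq_mul,
    ← Ring.descPochhammer_eq_factorial_smul_choose, ← descPochhammer_map (algebraMap ℤ R),
    Polynomial.eval_map, ← Polynomial.aeval_def, Polynomial.aeval_eq_smeval]

lemma prod_range_affine_sub {R : Type*} [CommRing R] (a b r : R) (k : ℕ) :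
    ∏ i ∈ range k, ((a * r + b) - (a * i + b)) = a ^ k * ∏ i ∈ range k, (r - i) := by
  simp_rw [add_sub_add_right_eq_sub, ← mul_sub, prod_mul_distrib, prod_const, card_range]

theorem arithmetic_progression_p_sequence_general (a b : ℤ) (p : ℕ) (hp : p.Prime)
    (k : ℕ) (n : ℤ) :
    InZLoc p
      ((∏ i ∈ Finset.range k, (((a * n + b : ℤ) : ℚ) - ((a * i + b : ℤ) : ℚ))) /
       (∏ i ∈ Finset.range k, (((a * k + b : ℤ) : ℚ) - ((a * i + b : ℤ) : ℚ)))) := by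
  have hprod (r : ℤ) : ∏ i ∈ range k, (((a * r + b : ℤ) : ℚ) - ((a * i + b : ℤ) : ℚ)) =
      ((a ^ k * k ! * Ring.choose r k : ℤ) : ℚ) := by
    rw [mul_assoc, ← prod_range_sub_eq_factorial_mul_choose, ← prod_range_affine_sub a b]
    norm_cast
  obtain ⟨m, hm⟩ := exists_intCast_eq_mul_div_self (a ^ k * k !) (Ring.choose n k)
  rw [hprod, hprod, Ring.choose_natCast, Nat.choose_self]
  push_cast at hm ⊢
  rw [mul_one, hm]
  exact inZLoc_intCast hp.ne_one m

/-- Let `S = aℤ + b`.  For every prime `p`, the sequence `u_i = a·i + b`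
is a `p`-sequence of `S`: for each `k > 0` the polynomial
`(x−u_0)⋯(x−u_{k−1})/((u_k−u_0)⋯(u_k−u_{k−1}))` maps every element of `S` into `ℤ_{(p)}`. -/
theorem arithmetic_progression_p_sequence (a b : ℤ) (p : ℕ) (hp : p.Prime)
    (k : ℕ) (hk : 0 < k) (n : ℤ) :
    InZLoc p
      ((∏ i ∈ Finset.range k, (((a * n + b : ℤ) : ℚ) - ((a * i + b : ℤ) : ℚ))) /
       (∏ i ∈ Finset.range k, (((a * k + b : ℤ) : ℚ) - ((a * i + b : ℤ) : ℚ)))) :=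
  arithmetic_progression_p_sequence_general a b p hp k n
end

section
/- Let S = aℤ + b for integers a ≠ 0 and b, and let f = g/d ∈ ℚ[x] with g ∈ ℤ[x], d ∈ ℤ nonzero, deg f = k. Then f ∈ Int(S, ℤ) if and only if f(a·i + b) ∈ ℤ for all 0 ≤ i ≤ k. -/
/-!
After the affine substitution `x ↦ a x + b` it suffices to show that a polynomial of degree
at most `k` taking integer values at `0, …, k` is integer-valued on `ℤ`. Its forward differences
`Δ^j P (0)` are integer combinations of `P (0), …, P (j)` for `j ≤ k` and vanish for `j > k`, so
the Gregory–Newton formula `P (n) = ∑ C(n, j) Δ^j P (0)` settles `n ∈ ℕ`; the reflected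
polynomial `P (k - x)` settles the negative integers.
-/

open Polynomial

namespace Polynomial

variable {R : Type*} [CommRing R]

theorem natDegree_comp_le_of_natDegree_le_one {p q : R[X]} (hq : q.natDegree ≤ 1) :
    (p.comp q).natDegree ≤ p.natDegree :=
  natDegree_comp_le.trans <| (Nat.mul_le_mul_left _ hq).trans_eq (mul_one _)

variable (A : AddSubgroup R) {P : R[X]} {k : ℕ}

theorem eval_natCast_mem_of_forall_le (hP : P.natDegree ≤ k)
    (hA : ∀ i ≤ k, P.eval (i : R) ∈ A) (n : ℕ) : P.eval (n : R) ∈ A := by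
  have hΔ (j : ℕ) : (fwdDiff 1)^[j] P.eval 0 ∈ A := by
    rcases le_or_gt j k with hj | hj
    · rw [fwdDiff_iter_eq_sum_shift]
      refine A.sum_mem fun i hi => A.zsmul_mem ?_ _
      rw [zero_add, nsmul_one]
      exact hA i (by have := Finset.mem_range.mp hi; omega)
    · rw [fwdDiff_iter_eq_zero_of_degree_lt (hP.trans_lt hj)]
      exact A.zero_mem
  have hNewton := shift_eq_sum_fwdDiff_iter 1 P.eval n 0
  rw [zero_add, nsmul_one] at hNewton
  rw [hNewton]
  exact A.sum_mem fun j _ => A.nsmul_mem (hΔ j) _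

theorem eval_intCast_mem_of_forall_le (hP : P.natDegree ≤ k)
    (hA : ∀ i ≤ k, P.eval (i : R) ∈ A) (n : ℤ) : P.eval (n : R) ∈ A := by
  cases n with
  | ofNat m => simpa using eval_natCast_mem_of_forall_le A hP hA m
  | negSucc m =>
    set Q := P.comp (C (k : R) - X)
    have hQ : Q.natDegree ≤ k := (natDegree_comp_le_of_natDegree_le_one <|
      natDegree_sub_le_of_le (natDegree_natCast k).le natDegree_X_le).trans hP
    have hreflect : Q.eval ((k + m + 1 : ℕ) : R) = P.eval ((Int.negSucc m : ℤ) : R) := by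
      simp only [Q, eval_comp, eval_sub, eval_C, eval_X, Int.cast_negSucc]
      push_cast
      ring_nf
    rw [← hreflect]
    refine eval_natCast_mem_of_forall_le A hQ (fun i hi => ?_) _
    simpa [Q, Nat.cast_sub hi] using hA (k - i) (Nat.sub_le _ _)

end Polynomial

theorem int_valued_iff_on_progression_general (a b : ℤ) (k : ℕ) (f : ℚ[X])
    (hdeg : f.natDegree = k) :
    (∀ n : ℤ, ∃ m : ℤ, f.eval ((a * n + b : ℤ) : ℚ) = (m : ℚ)) ↔
      (∀ i : ℕ, i ≤ k → ∃ m : ℤ, f.eval ((a * i + b : ℤ) : ℚ) = (m : ℚ)) := by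
  set h := f.comp (C (a : ℚ) * X + C (b : ℚ))
  have hmem (x : ℤ) : h.eval (x : ℚ) ∈ (Int.castAddHom ℚ).range ↔
      ∃ m : ℤ, f.eval ((a * x + b : ℤ) : ℚ) = m := by
    simp only [AddMonoidHom.mem_range, Int.coe_castAddHom, h, eval_comp, eval_add, eval_mul,
      eval_C, eval_X, Int.cast_add, Int.cast_mul, eq_comm]
  have hh : h.natDegree ≤ k :=
    hdeg ▸ natDegree_comp_le_of_natDegree_le_one natDegree_linear_le
  refine ⟨fun H i _ => H i, fun H n => ?_⟩
  rw [← hmem]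
  refine eval_intCast_mem_of_forall_le _ hh (fun i hi => ?_) n
  exact_mod_cast (hmem i).2 (H i hi)

/-- Let `S = aℤ + b` with `a ≠ 0`, and let `f = g/d ∈ ℚ[x]` with
`g ∈ ℤ[x]`, `d ≠ 0`, `deg f = k`.  Then `f ∈ Int(S, ℤ)` iff `f(a·i + b) ∈ ℤ` for
all `0 ≤ i ≤ k`. -/
theorem int_valued_iff_on_progression (a b : ℤ) (ha : a ≠ 0) (g : ℤ[X]) (d : ℤ)
    (hd : d ≠ 0) (k : ℕ) (f : ℚ[X])
    (hf : f = C ((d : ℚ))⁻¹ * g.map (Int.castRingHom ℚ))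
    (hdeg : f.natDegree = k) :
    (∀ n : ℤ, ∃ m : ℤ, f.eval ((a * n + b : ℤ) : ℚ) = (m : ℚ)) ↔
      (∀ i : ℕ, i ≤ k → ∃ m : ℤ, f.eval ((a * i + b : ℤ) : ℚ) = (m : ℚ)) :=
  int_valued_iff_on_progression_general a b k f hdeg
end

section
/- Let g₁ = x⁵ − 11x⁴ + 42x³ − 62x² + 26x − 2 and g₂ = x⁵ − 11x⁴ + 42x³ − 63x² + 30x + 3 in ℤ[x]. Then f = g₁g₂/6 ∈ Int(ℤ), i.e., 6 divides g₁(n)g₂(n) for every integer n. -/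
open Polynomial

theorem Polynomial.dvd_eval_of_forall_eval_map_zmod_eq_zero {p : ℤ[X]} {d : ℕ}
    (h : ∀ a : ZMod d, (p.map (Int.castRingHom (ZMod d))).eval a = 0) (n : ℤ) :
    (d : ℤ) ∣ p.eval n := by
  have := h n
  rwa [eval_intCast_map, Int.cast_id, eq_intCast, ZMod.intCast_zmod_eq_zero_iff_dvd] at this

theorem Polynomial.exists_eval_C_one_div_mul_map_eq_intCast {p : ℤ[X]} {d n : ℤ}
    (h : d ∣ p.eval n) :
    ∃ m : ℤ, (C (1 / (d : ℚ)) * p.map (Int.castRingHom ℚ)).eval (n : ℚ) = m := by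
  obtain ⟨m, hm⟩ := h
  rcases eq_or_ne d 0 with rfl | hd
  · -- `1 / 0 = 0` in `ℚ`, so the value is `0`.
    exact ⟨0, by simp⟩
  · refine ⟨m, ?_⟩
    rw [eval_mul, eval_C, eval_intCast_map, Int.cast_id, hm, eq_intCast]
    push_cast
    field_simp

/-- Let `g₁ = x⁵ − 11x⁴ + 42x³ − 62x² + 26x − 2` and
`g₂ = x⁵ − 11x⁴ + 42x³ − 63x² + 30x + 3` in `ℤ[x]`.  Then `f = g₁g₂/6 ∈ Int(ℤ)`,
i.e. `6` divides `g₁(n)g₂(n)` for every integer `n`. -/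
theorem example_g1g2_div6_int_valued
    (g₁ g₂ : ℤ[X])
    (hg₁ : g₁ = X ^ 5 - 11 * X ^ 4 + 42 * X ^ 3 - 62 * X ^ 2 + 26 * X - 2)
    (hg₂ : g₂ = X ^ 5 - 11 * X ^ 4 + 42 * X ^ 3 - 63 * X ^ 2 + 30 * X + 3) :
    (∀ n : ℤ, ∃ m : ℤ,
        (C (1 / 6 : ℚ) * ((g₁ * g₂).map (Int.castRingHom ℚ))).eval (n : ℚ) = (m : ℚ)) ∧
      (∀ n : ℤ, (6 : ℤ) ∣ g₁.eval n * g₂.eval n) := by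
  have hroots : ∀ a : ZMod 6, ((g₁ * g₂).map (Int.castRingHom (ZMod 6))).eval a = 0 := by
    subst hg₁ hg₂
    simp only [Polynomial.map_mul, Polynomial.map_sub, Polynomial.map_add, Polynomial.map_pow,
      map_X, Polynomial.map_ofNat, eval_mul, eval_sub, eval_add, eval_pow,
      eval_X, eval_ofNat]
    decide
  have hdvd (n : ℤ) : (6 : ℤ) ∣ (g₁ * g₂).eval n :=
    mod_cast dvd_eval_of_forall_eval_map_zmod_eq_zero hroots n
  exact ⟨fun n => by simpa using exists_eval_C_one_div_mul_map_eq_intCast (hdvd n),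
    fun n => by simpa using hdvd n⟩
end

section
/- For the set S of prime numbers in ℤ, the sequence 2, 3, 5, 7, 17 is a 2-sequence of length 4: for each 1 ≤ k ≤ 4, the polynomial (x−u_0)⋯(x−u_{k−1})/((u_k−u_0)⋯(u_k−u_{k−1})) with (u_0,…,u_4) = (2,3,5,7,17) maps every prime number into ℤ_{(2)}. -/
/-- A rational number lies in the localization `ℤ_{(2)}`: it can be written `x / y`
with `y` odd. -/
def InZ2 (q : ℚ) : Prop :=
  ∃ x y : ℤ, ¬ ((2 : ℤ) ∣ y) ∧ q = (x : ℚ) / (y : ℚ)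

/-- The sequence `2, 3, 5, 7, 17` (extended arbitrarily by `0`). -/
def primeSeq : ℕ → ℤ
  | 0 => 2
  | 1 => 3
  | 2 => 5
  | 3 => 7
  | 4 => 17
  | _ => 0

/-!
Write `u = (2, 3, 5, 7, 17)`. The denominator `∏_{i<k} (u_k - u_i)` is `2 ^ e_k` times an odd
number, with `e = (0, 0, 1, 3, 4)` for `k = 0, …, 4`, so it suffices that `2 ^ e_k` divides the
numerator `∏_{i<k} (p - u_i)` at every prime `p`. For `p = 2` the numerator vanishes once
`k ≥ 1`. For odd `p` the factors `p - 3, p - 5, p - 7` are consecutive even numbers: two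
consecutive even numbers have a product divisible by `8`, and a third one brings a further `2`.
-/

open Finset

theorem InZ2.intCast_div_mul {a d c : ℤ} (hda : d ∣ a) (hc : ¬ 2 ∣ c) :
    InZ2 ((a : ℚ) / ((d * c : ℤ) : ℚ)) := by
  obtain ⟨b, rfl⟩ := hda
  rcases eq_or_ne d 0 with rfl | hd
  · exact ⟨0, 1, by decide, by simp⟩
  · refine ⟨b, c, hc, ?_⟩
    push_cast
    exact mul_div_mul_left _ _ (Int.cast_ne_zero.mpr hd)

theorem Int.eight_dvd_mul_add_two {a : ℤ} (ha : Even a) : 8 ∣ a * (a + 2) := by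
  obtain ⟨r, rfl⟩ := ha
  obtain ⟨s, hs⟩ := Int.even_mul_succ_self r
  exact ⟨s, by linear_combination 4 * hs⟩

def primeSeqDenomTwoExp : ℕ → ℕ
  | 2 => 1
  | 3 => 3
  | 4 => 4
  | _ => 0

theorem prod_primeSeq_sub_primeSeq_eq {k : ℕ} (hk : k ≤ 4) :
    ∃ c : ℤ, ¬ 2 ∣ c ∧
      ∏ i ∈ range k, (primeSeq k - primeSeq i) = 2 ^ primeSeqDenomTwoExp k * c := by
  interval_cases k
  · exact ⟨1, by decide, rfl⟩
  · exact ⟨1, by decide, rfl⟩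
  · exact ⟨3, by decide, rfl⟩
  · exact ⟨5, by decide, rfl⟩
  · exact ⟨1575, by decide, rfl⟩

theorem two_pow_dvd_prod_two_sub_primeSeq (k : ℕ) :
    2 ^ primeSeqDenomTwoExp k ∣ ∏ i ∈ range k, (2 - primeSeq i) := by
  cases k with
  | zero => simp [primeSeqDenomTwoExp]
  | succ k =>
    rw [prod_eq_zero (i := 0) (by simp) (by simp [primeSeq])]
    exact dvd_zero _

theorem two_pow_dvd_prod_sub_primeSeq_of_odd {n : ℤ} (hn : Odd n) {k : ℕ} (hk : k ≤ 4) :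
    2 ^ primeSeqDenomTwoExp k ∣ ∏ i ∈ range k, (n - primeSeq i) := by
  have h3 : Even (n - 3) := hn.sub_odd (by decide)
  have h7 : Even (n - 7) := hn.sub_odd (by decide)
  have h35 : 8 ∣ (n - 5) * (n - 5 + 2) := Int.eight_dvd_mul_add_two (hn.sub_odd (by decide))
  have h57 : 8 ∣ (n - 7) * (n - 7 + 2) := Int.eight_dvd_mul_add_two h7
  interval_cases k <;>
    simp only [prod_range_succ, prod_range_zero, primeSeq, primeSeqDenomTwoExp, pow_zero,
      one_dvd]
  · exact Dvd.dvd.mul_left (even_iff_two_dvd.mp h3) _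
  · have : (n - 2) * (n - 3) * (n - 5) = (n - 2) * ((n - 5) * (n - 5 + 2)) := by ring
    rw [one_mul, this]
    exact Dvd.dvd.mul_left h35 _
  · have : (n - 2) * (n - 3) * (n - 5) * (n - 7) =
        (n - 2) * ((n - 3) * ((n - 7) * (n - 7 + 2))) := by ring
    rw [one_mul, this]
    exact Dvd.dvd.mul_left (mul_dvd_mul (even_iff_two_dvd.mp h3) h57) _

theorem primes_two_sequence_general (k : ℕ) (hk4 : k ≤ 4)
    (n : ℕ) (hn : n.Prime) :
    InZ2
      ((∏ i ∈ Finset.range k, ((n : ℚ) - (primeSeq i : ℚ))) /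
       (∏ i ∈ Finset.range k, ((primeSeq k : ℚ) - (primeSeq i : ℚ)))) := by
  obtain ⟨c, hc, hdenom⟩ := prod_primeSeq_sub_primeSeq_eq hk4
  have hnum : 2 ^ primeSeqDenomTwoExp k ∣ ∏ i ∈ range k, ((n : ℤ) - primeSeq i) := by
    rcases hn.eq_two_or_odd' with rfl | hodd
    · exact two_pow_dvd_prod_two_sub_primeSeq k
    · exact two_pow_dvd_prod_sub_primeSeq_of_odd (by exact_mod_cast hodd) hk4
  have key := InZ2.intCast_div_mul hnum hc
  rw [← hdenom] at key
  exact_mod_cast key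

/-- For the set `S` of prime numbers in `ℤ`, the sequence
`2, 3, 5, 7, 17` is a `2`-sequence of length `4`: for each `1 ≤ k ≤ 4` the
polynomial `(x−u_0)⋯(x−u_{k−1})/((u_k−u_0)⋯(u_k−u_{k−1}))` maps every prime number
into `ℤ_{(2)}`. -/
theorem primes_two_sequence (k : ℕ) (hk1 : 1 ≤ k) (hk4 : k ≤ 4)
    (n : ℕ) (hn : n.Prime) :
    InZ2
      ((∏ i ∈ Finset.range k, ((n : ℚ) - (primeSeq i : ℚ))) /
       (∏ i ∈ Finset.range k, ((primeSeq k : ℚ) - (primeSeq i : ℚ)))) :=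
  primes_two_sequence_general k hk4 n hn
end
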